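/- Let m be the measure on the Borel σ-algebra of ℝ^ℕ defined by m(A) = sup_k μ_k(A ∩ ℝ_I^k), where I = [−1/2,1/2], ℝ_I^k = {x ∈ ℝ^ℕ : x_i ∈ I for all i > k}, and μ_k is the product of k-dimensional Lebesgue measure on the first k coordinates with the countable product of uniform probability measures on I on the remaining coordinates. Then for every n ∈ ℕ, every Borel set A ⊆ ℝ^n, every a ∈ ℝ^n, and every linear isometry T of ℝ^n, one has m((A + a) × I_n) = m(A × I_n) and m(T(A) × I_n) = m(A × I_n), where A × I_n := {x ∈ ℝ^ℕ : (x_1, …, x_n) ∈ A and x_i ∈ I for all i > n}. That is, m is translationally and rotationally invariant on ℝ_I^n. -/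

import Mathlib

open MeasureTheory
open scoped ENNReal

/-- The interval `I = [-1/2, 1/2]`. -/
def Icube : Set ℝ := Set.Icc (-(1 / 2) : ℝ) (1 / 2)

/-- `ℝ_I^k`: the sequences whose coordinates beyond the first `k` lie in `I`. -/
def RIn (k : ℕ) : Set (ℕ → ℝ) := {x | ∀ i, k ≤ i → x i ∈ Icube}

/-- `μₖ` is the product of `k`-dimensional Lebesgue measure on the first `k`
coordinates with the countable product of copies of the uniform probability measure
on `I = [-1/2, 1/2]` (one-dimensional Lebesgue measure restricted to `I`) on the
remaining coordinates.  This is characterized (uniquely, by the π-system of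
measurable cylinders together with the σ-finite exhaustion by cylinders with bounded
first `k` coordinates) by the product formula on measurable cylinders
`{x | ∀ i < m, x i ∈ A i}` for `m ≥ k`. -/
def IsProdWithUniform (k : ℕ) (μk : Measure (ℕ → ℝ)) : Prop :=
  ∀ m : ℕ, k ≤ m → ∀ A : ℕ → Set ℝ, (∀ i, MeasurableSet (A i)) →
    μk {x | ∀ i, i < m → x i ∈ A i} =
      (∏ i ∈ Finset.range k, volume (A i)) * ∏ i ∈ Finset.Ico k m, volume (A i ∩ Icube)

/-- The set function `m(A) = sup_k μₖ(A ∩ ℝ_I^k)`. -/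
noncomputable def mSup (μ : ℕ → Measure (ℕ → ℝ)) (A : Set (ℕ → ℝ)) : ℝ≥0∞ :=
  ⨆ k, μ k (A ∩ RIn k)

/-- The cylinder `A × I_n ⊆ ℝ^ℕ` over a set `A ⊆ ℝ^n`. -/
def cylSet (n : ℕ) (A : Set (Fin n → ℝ)) : Set (ℕ → ℝ) :=
  {x : ℕ → ℝ | (fun i : Fin n => x (i : ℕ)) ∈ A ∧ ∀ i, n ≤ i → x i ∈ Icube}

/-! Each `μₖ` is concentrated on `ℝ_I^k`, and the image of `μₖ` restricted to `ℝ_I^n` under the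
projection to the first `n` coordinates is the product of Lebesgue measure on the coordinates
`i < k` and of the uniform measure on `I` on the others. So the `k`-th term in `m(A × I_n)` is the
Lebesgue measure of `A ∩ (ℝ^k × I^(n-k))`, which is `λⁿ(A)` for `k ≥ n`: `m(A × I_n) = λⁿ(A)`.
Lebesgue measure is invariant under translations and under linear maps with `|det| = 1`, and a
map preserving the Euclidean norm is an isometry of `EuclideanSpace`, whose determinant has
absolute value one. -/

open Set

lemma measurableSet_Icube : MeasurableSet Icube := measurableSet_Icc

lemma volume_Icube : volume Icube = 1 := by
  rw [Icube, Real.volume_Icc]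
  norm_num

/-- `μₖ` is the product of the measures `volume.restrict (factorSupport k i)`. -/
def factorSupport (k i : ℕ) : Set ℝ := if i < k then univ else Icube

lemma factorSupport_of_lt {k i : ℕ} (h : i < k) : factorSupport k i = univ := if_pos h

lemma factorSupport_of_le {k i : ℕ} (h : k ≤ i) : factorSupport k i = Icube :=
  if_neg (Nat.not_lt.2 h)

lemma volume_restrict_factorSupport_Icube (k i : ℕ) :
    volume.restrict (factorSupport k i) Icube = 1 := by
  rw [Measure.restrict_apply measurableSet_Icube]
  rcases lt_or_ge i k with h | h
  · rw [factorSupport_of_lt h, inter_univ, volume_Icube]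
  · rw [factorSupport_of_le h, inter_self, volume_Icube]

def firstCoords {α : Type*} (n : ℕ) (x : ℕ → α) : Fin n → α := fun i => x i

lemma measurable_firstCoords {α : Type*} [MeasurableSpace α] (n : ℕ) :
    Measurable (firstCoords (α := α) n) :=
  measurable_pi_lambda _ fun i => measurable_pi_apply (i : ℕ)

lemma cylSet_eq_preimage_inter_RIn (n : ℕ) (A : Set (Fin n → ℝ)) :
    cylSet n A = firstCoords n ⁻¹' A ∩ RIn n := rfl

namespace IsProdWithUniform

variable {k : ℕ} {μk : Measure (ℕ → ℝ)}

lemma measure_box (h : IsProdWithUniform k μk) {m : ℕ} (hm : k ≤ m) {A : ℕ → Set ℝ}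
    (hA : ∀ i, MeasurableSet (A i)) :
    μk {x | ∀ i, i < m → x i ∈ A i} =
      ∏ i ∈ Finset.range m, volume.restrict (factorSupport k i) (A i) := by
  rw [h m hm A hA, ← Finset.prod_range_mul_prod_Ico _ hm]
  congr 1 <;> refine Finset.prod_congr rfl fun i hi => ?_
  · rw [Measure.restrict_apply (hA i), factorSupport_of_lt (Finset.mem_range.1 hi), inter_univ]
  · rw [Measure.restrict_apply (hA i), factorSupport_of_le (Finset.mem_Ico.1 hi).1]

/-- The infinite mass of the first `k` coordinates is multiplied by the null mass of `Iᶜ`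
under the uniform factor, and `∞ * 0 = 0`. -/
lemma measure_compl_RIn (h : IsProdWithUniform k μk) : μk (RIn k)ᶜ = 0 := by
  have hcompl : (RIn k)ᶜ = ⋃ i ∈ {i | k ≤ i}, {x : ℕ → ℝ | x i ∉ Icube} := by
    ext x; simp [RIn]
  rw [hcompl, measure_biUnion_null_iff (to_countable _)]
  intro i hi
  let A : ℕ → Set ℝ := fun j => if j = i then Icubeᶜ else univ
  have hA : ∀ j, MeasurableSet (A j) := fun j => by
    by_cases hj : j = i <;> simp [A, hj, measurableSet_Icube.compl]
  refine measure_mono_null ?_ ((h.measure_box (m := i + 1) (le_add_right hi) hA).trans ?_)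
  · intro x hx j _
    by_cases hj : j = i
    · subst hj; simpa [A] using hx
    · simp [A, hj]
  · refine Finset.prod_eq_zero (Finset.self_mem_range_succ i) ?_
    simp [A, Measure.restrict_apply measurableSet_Icube.compl, factorSupport_of_le hi]

lemma measure_inter_RIn (h : IsProdWithUniform k μk) (s : Set (ℕ → ℝ)) :
    μk (s ∩ RIn k) = μk s :=
  measure_inter_conull h.measure_compl_RIn

lemma map_firstCoords_restrict_RIn (h : IsProdWithUniform k μk) (n : ℕ) :
    (μk.restrict (RIn n)).map (firstCoords n) =
      Measure.pi fun i : Fin n => volume.restrict (factorSupport k i) := by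
  refine (Measure.pi_eq fun s hs => ?_).symm
  let C : ℕ → Set ℝ := fun i => if hi : i < n then s ⟨i, hi⟩ else Icube
  have hC : ∀ i, MeasurableSet (C i) := fun i => by
    by_cases hi : i < n <;> simp [C, hi, hs _, measurableSet_Icube]
  have hbox : firstCoords n ⁻¹' univ.pi s ∩ RIn n ∩ RIn k =
      {x | ∀ i, i < max n k → x i ∈ C i} ∩ RIn k := by
    ext x
    simp only [mem_inter_iff, mem_preimage, mem_univ_pi, RIn, mem_ofPred_eq, firstCoords, C]
    constructor
    · rintro ⟨⟨hs, hI⟩, hk⟩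
      refine ⟨fun i _ => ?_, hk⟩
      by_cases hi : i < n
      · simpa [hi] using hs ⟨i, hi⟩
      · simpa [hi] using hI i (Nat.le_of_not_lt hi)
    · rintro ⟨hC, hk⟩
      refine ⟨⟨fun i => by simpa using hC i (by omega), fun i hi => ?_⟩, hk⟩
      by_cases hik : i < max n k
      · simpa [Nat.not_lt.2 hi] using hC i hik
      · exact hk i (by omega)
  have htail : ∏ i ∈ Finset.Ico n (max n k), volume.restrict (factorSupport k i) (C i) = 1 :=
    Finset.prod_eq_one fun i hi => by
      simp [C, Nat.not_lt.2 (Finset.mem_Ico.1 hi).1, volume_restrict_factorSupport_Icube]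
  rw [Measure.map_apply (measurable_firstCoords n) (.univ_pi hs),
    Measure.restrict_apply (measurable_firstCoords n (.univ_pi hs)), ← h.measure_inter_RIn, hbox,
    h.measure_inter_RIn, h.measure_box (le_max_right n k) hC,
    ← Finset.prod_range_mul_prod_Ico _ (le_max_left n k), htail, mul_one,
    ← Fin.prod_univ_eq_prod_range]
  simp [C]

lemma measure_cylSet_inter_RIn (h : IsProdWithUniform k μk) {n : ℕ} {A : Set (Fin n → ℝ)}
    (hA : MeasurableSet A) :
    μk (cylSet n A ∩ RIn k) = volume (A ∩ univ.pi fun i : Fin n => factorSupport k i) := by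
  rw [h.measure_inter_RIn, cylSet_eq_preimage_inter_RIn,
    ← Measure.restrict_apply (measurable_firstCoords n hA),
    ← Measure.map_apply (measurable_firstCoords n) hA, h.map_firstCoords_restrict_RIn,
    ← Measure.restrict_pi_pi, Measure.restrict_apply hA, volume_pi]

end IsProdWithUniform

theorem mSup_cylSet {μ : ℕ → Measure (ℕ → ℝ)} (hμ : ∀ k, IsProdWithUniform k (μ k)) {n : ℕ}
    {A : Set (Fin n → ℝ)} (hA : MeasurableSet A) : mSup μ (cylSet n A) = volume A := by
  simp only [mSup, (hμ _).measure_cylSet_inter_RIn hA]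
  refine le_antisymm (iSup_le fun k => measure_mono inter_subset_left) (le_iSup_of_le n ?_)
  simp [factorSupport_of_lt]

section SumSqPreserving

variable {ι : Type*} [Fintype ι] (T : (ι → ℝ) →ₗ[ℝ] (ι → ℝ))

def euclideanIsometryOfSumSq (hT : ∀ y : ι → ℝ, ∑ i, (T y i) ^ 2 = ∑ i, (y i) ^ 2) :
    EuclideanSpace ℝ ι →ₗᵢ[ℝ] EuclideanSpace ℝ ι where
  toLinearMap := (WithLp.linearEquiv 2 ℝ (ι → ℝ)).symm.conj T
  norm_map' x := by simp [EuclideanSpace.norm_eq, LinearEquiv.conj_apply, hT]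

lemma abs_det_eq_one_of_sum_sq (hT : ∀ y : ι → ℝ, ∑ i, (T y i) ^ 2 = ∑ i, (y i) ^ 2) :
    |LinearMap.det T| = 1 := by
  have h : ‖LinearMap.det ((WithLp.linearEquiv 2 ℝ (ι → ℝ)).symm.conj T)‖ = 1 := by
    rw [← LinearMap.normDet_eq_norm_det]
    exact (euclideanIsometryOfSumSq T hT).normDet_eq_one
  rwa [LinearEquiv.conj_apply, LinearMap.comp_assoc, LinearMap.det_conj, Real.norm_eq_abs] at h

lemma injective_of_sum_sq (hT : ∀ y : ι → ℝ, ∑ i, (T y i) ^ 2 = ∑ i, (y i) ^ 2) :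
    Function.Injective T := by
  have hdet : LinearMap.det T ≠ 0 := fun h0 => by
    simpa [h0] using abs_det_eq_one_of_sum_sq T hT
  exact ((Module.End.isUnit_iff T).1 ((LinearMap.isUnit_iff_isUnit_det T).2 hdet.isUnit)).1

lemma volume_image_of_sum_sq (hT : ∀ y : ι → ℝ, ∑ i, (T y i) ^ 2 = ∑ i, (y i) ^ 2)
    (A : Set (ι → ℝ)) : volume (T '' A) = volume A := by
  rw [Measure.addHaar_image_linearMap, abs_det_eq_one_of_sum_sq T hT, ENNReal.ofReal_one, one_mul]

end SumSqPreserving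

/-- `m(A) = sup_k μₖ(A ∩ ℝ_I^k)` is translation and rotation invariant
on the cylinders over `ℝ^n`: for every Borel set `A ⊆ ℝ^n`, every vector `a ∈ ℝ^n`
and every linear map `T : ℝ^n → ℝ^n` preserving the Euclidean norm,
`m((A + a) × I_n) = m(A × I_n)` and `m(T(A) × I_n) = m(A × I_n)`. -/
theorem mSup_translation_rotation_invariant
    (μ : ℕ → Measure (ℕ → ℝ)) (hμ : ∀ k, IsProdWithUniform k (μ k)) :
    ∀ (n : ℕ) (A : Set (Fin n → ℝ)), MeasurableSet A →
      (∀ a : Fin n → ℝ,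
        mSup μ (cylSet n ((fun y => y + a) '' A)) = mSup μ (cylSet n A)) ∧
      (∀ T : (Fin n → ℝ) →ₗ[ℝ] (Fin n → ℝ),
        (∀ y : Fin n → ℝ, ∑ i, (T y i) ^ 2 = ∑ i, (y i) ^ 2) →
          mSup μ (cylSet n (T '' A)) = mSup μ (cylSet n A)) := by
  intro n A hA
  refine ⟨fun a => ?_, fun T hT => ?_⟩
  · have hA' : MeasurableSet ((fun y => y + a) '' A) :=
      hA.image_of_continuousOn_injOn (continuous_add_const a).continuousOn
        (add_left_injective a).injOn
    rw [mSup_cylSet hμ hA', mSup_cylSet hμ hA, image_add_right, measure_preimage_add_right]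
  · have hTA : MeasurableSet (T '' A) :=
      hA.image_of_continuousOn_injOn T.continuous_of_finiteDimensional.continuousOn
        (injective_of_sum_sq T hT).injOn
    rw [mSup_cylSet hμ hTA, mSup_cylSet hμ hA, volume_image_of_sum_sq T hT]
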